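/- Let k ≥ 3 be an integer, and suppose 0 ≤ a < 1/k and (k-1)/k < b ≤ 1. If x ∈ (0,1) is of the form x = ℓ/k^m for natural numbers ℓ, m, then g_k(x) ∉ W_2(g_k(a), g_k(b)); that is, there exists n ≥ 0 with T_2^n(g_k(x)) ∈ (g_k(a), g_k(b)). -/

import Mathlib

open scoped ENNReal

/-- The `k`-transformation `x ↦ k·x mod 1`. -/
noncomputable def Tmap (k : ℕ) (x : ℝ) : ℝ := Int.fract ((k : ℝ) * x)

/-- The survivor set of the `k`-transformation with hole `(a,b)`. -/
def W (k : ℕ) (a b : ℝ) : Set ℝ :=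
  {x | x ∈ Set.Ico (0 : ℝ) 1 ∧ ∀ n : ℕ, (Tmap k)^[n] x ∉ Set.Ioo a b}

/-- The generalized Cantor set `C_k`. -/
def Ck (k : ℕ) : Set ℝ :=
  {x | ∃ a : ℕ → ℕ, (∀ n, a n = 0 ∨ a n = k - 1) ∧
    x = ∑' n : ℕ, (a n : ℝ) / (k : ℝ) ^ (n + 1)}

/-- The `n`-th `k`-ary digit of `x`. -/
noncomputable def digit (k : ℕ) (n : ℕ) (x : ℝ) : ℤ :=
  ⌊(k : ℝ) ^ (n + 1) * x⌋ % (k : ℤ)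

open Classical in
/-- The generalized Cantor function `g_k`. -/
noncomputable def gk (k : ℕ) (x : ℝ) : ℝ :=
  if x = 1 then 1
  else if ∀ n, digit k n x = 0 ∨ digit k n x = (k : ℤ) - 1 then
    ∑' n : ℕ, (digit k n x : ℝ) / (((k : ℝ) - 1) * 2 ^ (n + 1))
  else
    (∑ n ∈ Finset.range (sInf {n : ℕ | ¬(digit k n x = 0 ∨ digit k n x = (k : ℤ) - 1)}),
      (digit k n x : ℝ) / (((k : ℝ) - 1) * 2 ^ (n + 1))) +
    1 / 2 ^ (sInf {n : ℕ | ¬(digit k n x = 0 ∨ digit k n x = (k : ℤ) - 1)} + 1)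

/-- The Thue–Morse sequence: parity of the number of 1s in the binary expansion. -/
def tm (n : ℕ) : ℕ := (Nat.digits 2 n).sum % 2

/-! For `x = ℓ/kᵐ` the formula defining `g_k x` always ends with a term `1/2^(N+1)`: either `N`
is the first digit of `x` outside `{0, k-1}`, or all digits lie in `{0, k-1}`, the expansion
terminates, and `N` is its last nonzero digit. The earlier terms sum to `j/2^N` with `j < 2^N`,
so `g_k x = (2j+1)/2^(N+1)` and `T_2^N (g_k x) = 1/2`. The first digit of `a` is `0` and that of
`b` is `k-1`, which gives `g_k a < 1/2 < g_k b`; the inequalities are strict because a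
floor-computed expansion never ends in `(k-1)^∞`, and `b ≠ (k-1)/k`. -/

section CantorFunction

variable {k : ℕ} {x : ℝ}

lemma digit_nonneg (hk : k ≠ 0) (n : ℕ) (x : ℝ) : 0 ≤ digit k n x :=
  Int.emod_nonneg _ (by exact_mod_cast hk)

lemma digit_lt (hk : k ≠ 0) (n : ℕ) (x : ℝ) : digit k n x < k :=
  Int.emod_lt_of_pos _ (by exact_mod_cast Nat.pos_of_ne_zero hk)

lemma floor_pow_succ_mul (hk : k ≠ 0) (n : ℕ) (x : ℝ) :
    ⌊(k : ℝ) ^ (n + 1) * x⌋ = k * ⌊(k : ℝ) ^ n * x⌋ + digit k n x := by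
  have hdiv : (k : ℝ) ^ n * x = (k : ℝ) ^ (n + 1) * x / k := by
    rw [pow_succ, mul_right_comm, mul_div_cancel_right₀ _ (by exact_mod_cast hk)]
  rw [hdiv, Int.floor_div_natCast, digit, Int.mul_ediv_add_emod]

lemma digit_zero_eq_floor (hk : k ≠ 0) (hx : x ∈ Set.Ico 0 1) : digit k 0 x = ⌊(k : ℝ) * x⌋ := by
  have h := floor_pow_succ_mul hk 0 x
  rw [pow_one, pow_zero, one_mul, Int.floor_eq_zero_iff.mpr hx, mul_zero, zero_add] at h
  exact h.symm

lemma digit_eq_zero_of_le (hk : k ≠ 0) (l : ℕ) {m n : ℕ} (hmn : m ≤ n) :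
    digit k n ((l : ℝ) / (k : ℝ) ^ m) = 0 := by
  have hval : (k : ℝ) ^ (n + 1) * ((l : ℝ) / (k : ℝ) ^ m) = ((l * k ^ (n - m) * k : ℕ) : ℝ) := by
    rw [show n + 1 = (n - m) + 1 + m by omega]
    push_cast
    field_simp
    ring
  rw [digit, hval, Int.floor_natCast]
  exact Int.emod_eq_zero_of_dvd (by push_cast; exact dvd_mul_left _ _)

lemma floor_pow_add_mul_of_digit_eq_zero (hk : k ≠ 0) {i : ℕ}
    (h : ∀ n, i ≤ n → digit k n x = 0) (t : ℕ) :
    ⌊(k : ℝ) ^ (i + t) * x⌋ = k ^ t * ⌊(k : ℝ) ^ i * x⌋ := by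
  induction t with
  | zero => simp
  | succ t ih =>
    rw [← add_assoc, floor_pow_succ_mul hk, ih, h _ (by omega)]
    ring

lemma floor_pow_add_mul_add_one_of_digit_eq_pred (hk : k ≠ 0) {i : ℕ}
    (h : ∀ n, i ≤ n → digit k n x = k - 1) (t : ℕ) :
    ⌊(k : ℝ) ^ (i + t) * x⌋ + 1 = k ^ t * (⌊(k : ℝ) ^ i * x⌋ + 1) := by
  induction t with
  | zero => simp
  | succ t ih =>
    rw [← add_assoc, floor_pow_succ_mul hk, h _ (by omega), pow_succ]
    linear_combination (k : ℤ) * ih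

lemma pow_mul_eq_floor_of_digit_eq_zero (hk : 1 < k) {i : ℕ}
    (h : ∀ n, i ≤ n → digit k n x = 0) : (k : ℝ) ^ i * x = ⌊(k : ℝ) ^ i * x⌋ := by
  set y := (k : ℝ) ^ i * x
  have hk' : (1 : ℝ) < k := by exact_mod_cast hk
  have hsmall : ∀ t : ℕ, y - ⌊y⌋ < (1 / k) ^ t := fun t => by
    have hfl := floor_pow_add_mul_of_digit_eq_zero (by omega) h t
    have hlt := Int.lt_floor_add_one ((k : ℝ) ^ (i + t) * x)
    rw [hfl, pow_add, mul_assoc] at hlt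
    push_cast at hlt
    rw [one_div_pow, lt_div_iff₀ (by positivity)]
    nlinarith
  refine le_antisymm ?_ (Int.floor_le y)
  by_contra! hpos
  obtain ⟨t, ht⟩ := exists_pow_lt_of_lt_one (sub_pos.mpr hpos) ((div_lt_one (by linarith)).mpr hk')
  exact (hsmall t).not_gt ht

lemma exists_digit_ne_pred (hk : 1 < k) (x : ℝ) (i : ℕ) : ∃ n, i ≤ n ∧ digit k n x ≠ k - 1 := by
  by_contra! h
  have hk' : (1 : ℝ) < k := by exact_mod_cast hk
  have hsmall : ∀ t : ℕ, ⌊(k : ℝ) ^ i * x⌋ + 1 - (k : ℝ) ^ i * x ≤ (1 / k) ^ t := fun t => by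
    have hfl := eq_sub_of_add_eq (floor_pow_add_mul_add_one_of_digit_eq_pred (by omega) h t)
    have hle := Int.floor_le ((k : ℝ) ^ (i + t) * x)
    rw [hfl, pow_add, mul_assoc] at hle
    push_cast at hle
    rw [one_div_pow, le_div_iff₀ (by positivity)]
    nlinarith
  obtain ⟨t, ht⟩ := exists_pow_lt_of_lt_one (sub_pos.mpr (Int.lt_floor_add_one ((k : ℝ) ^ i * x)))
    ((div_lt_one (by linarith)).mpr hk')
  exact (hsmall t).not_gt ht

def IsCantorDigit (k : ℕ) (d : ℤ) : Prop := d = 0 ∨ d = (k : ℤ) - 1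

noncomputable def gkTerm (k n : ℕ) (x : ℝ) : ℝ := (digit k n x : ℝ) / (((k : ℝ) - 1) * 2 ^ (n + 1))

lemma gkTerm_nonneg (hk : 1 < k) (n : ℕ) (x : ℝ) : 0 ≤ gkTerm k n x := by
  have hk' : (1 : ℝ) < k := by exact_mod_cast hk
  have hd : (0 : ℝ) ≤ digit k n x := by exact_mod_cast digit_nonneg (by omega) n x
  exact div_nonneg hd (mul_nonneg (by linarith) (by positivity))

lemma gkTerm_le (hk : 1 < k) (n : ℕ) (x : ℝ) : gkTerm k n x ≤ (1 / 2) ^ (n + 1) := by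
  have hk' : (0 : ℝ) < k - 1 := by
    have : (1 : ℝ) < k := by exact_mod_cast hk
    linarith
  have hd : (digit k n x : ℝ) ≤ k - 1 := by
    have := digit_lt (k := k) (by omega) n x
    exact_mod_cast Int.le_sub_one_of_lt this
  rw [gkTerm, div_le_iff₀ (by positivity), one_div_pow, div_mul_eq_mul_div, one_mul,
    mul_div_cancel_right₀ _ (by positivity)]
  exact hd

lemma gkTerm_of_digit_eq_zero {n : ℕ} (h : digit k n x = 0) : gkTerm k n x = 0 := by
  simp [gkTerm, h]

lemma gkTerm_of_digit_eq_pred (hk : 1 < k) {n : ℕ} (h : digit k n x = k - 1) :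
    gkTerm k n x = (1 / 2) ^ (n + 1) := by
  have hk' : (k : ℝ) - 1 ≠ 0 := by
    have : (1 : ℝ) < k := by exact_mod_cast hk
    linarith
  rw [gkTerm, h, one_div_pow]
  push_cast
  field_simp

lemma summable_gkTerm (hk : 1 < k) (x : ℝ) : Summable (gkTerm k · x) :=
  .of_nonneg_of_le (gkTerm_nonneg hk · x) (gkTerm_le hk · x)
    ((summable_nat_add_iff 1).mpr summable_geometric_two)

lemma gk_eq_tsum (hx : x ≠ 1) (h : ∀ n, IsCantorDigit k (digit k n x)) :
    gk k x = ∑' n, gkTerm k n x := by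
  rw [gk, if_neg hx]
  exact if_pos h

lemma exists_gk_eq_sum_add (hx : x ≠ 1) (h : ¬∀ n, IsCantorDigit k (digit k n x)) :
    ∃ N, ¬IsCantorDigit k (digit k N x) ∧ (∀ n < N, IsCantorDigit k (digit k n x)) ∧
      gk k x = ∑ n ∈ Finset.range N, gkTerm k n x + 1 / 2 ^ (N + 1) := by
  classical
  have hex := not_forall.mp h
  have hmin : ∀ n < Nat.find hex, IsCantorDigit k (digit k n x) := fun n hn =>
    not_not.mp (Nat.find_min hex hn)
  have hfirst : sInf {n : ℕ | ¬IsCantorDigit k (digit k n x)} = Nat.find hex :=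
    IsLeast.csInf_eq ⟨Nat.find_spec hex, fun n hn => not_lt.mp fun hlt => hn (hmin n hlt)⟩
  refine ⟨Nat.find hex, Nat.find_spec hex, hmin, ?_⟩
  rw [gk, if_neg hx]
  refine (if_neg h).trans ?_
  exact congrArg (fun M => ∑ n ∈ Finset.range M, gkTerm k n x + 1 / 2 ^ (M + 1)) hfirst

lemma exists_sum_gkTerm_eq_nat_div (hk : 1 < k) (x : ℝ) :
    ∀ N : ℕ, (∀ n < N, IsCantorDigit k (digit k n x)) →
      ∃ j : ℕ, j < 2 ^ N ∧ ∑ n ∈ Finset.range N, gkTerm k n x = j / 2 ^ N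
  | 0, _ => ⟨0, by simp⟩
  | N + 1, h => by
    obtain ⟨j, hj, hsum⟩ := exists_sum_gkTerm_eq_nat_div hk x N fun n hn => h n (by omega)
    rw [Finset.sum_range_succ, hsum]
    rcases h N (by omega) with h0 | h1
    · refine ⟨2 * j, by omega, ?_⟩
      rw [gkTerm_of_digit_eq_zero h0, add_zero, pow_succ]
      push_cast
      field_simp
    · refine ⟨2 * j + 1, by omega, ?_⟩
      rw [gkTerm_of_digit_eq_pred hk h1, one_div_pow, pow_succ]
      push_cast
      field_simp

lemma exists_last_digit_ne_zero (hk : 1 < k) (hx : x ∈ Set.Ioo 0 1) {l m : ℕ}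
    (hxe : x = l / (k : ℝ) ^ m) :
    ∃ N, digit k N x ≠ 0 ∧ ∀ n, N < n → digit k n x = 0 := by
  have hfin : ∀ n, m ≤ n → digit k n x = 0 := fun n hn => hxe ▸ digit_eq_zero_of_le (by omega) l hn
  obtain ⟨n₀, hn₀⟩ : ∃ n, digit k n x ≠ 0 := by
    by_contra! h
    have hint := pow_mul_eq_floor_of_digit_eq_zero hk (i := 0) fun n _ => h n
    rw [pow_zero, one_mul, Int.floor_eq_zero_iff.mpr ⟨hx.1.le, hx.2⟩, Int.cast_zero] at hint
    exact hx.1.ne' hint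
  have hn₀m : n₀ ≤ m := by
    by_contra! h
    exact hn₀ (hfin n₀ h.le)
  refine ⟨Nat.findGreatest (digit k · x ≠ 0) m,
    Nat.findGreatest_spec (P := (digit k · x ≠ 0)) hn₀m hn₀, fun n hn => ?_⟩
  by_cases hnm : n ≤ m
  · exact not_not.mp (Nat.findGreatest_is_greatest hn hnm)
  · exact hfin n (by omega)

lemma gk_eq_dyadic (hk : 1 < k) (hx : x ∈ Set.Ioo 0 1) {l m : ℕ} (hxe : x = l / (k : ℝ) ^ m) :
    ∃ N j : ℕ, j < 2 ^ N ∧ gk k x = j / 2 ^ N + 1 / 2 ^ (N + 1) := by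
  suffices h : ∃ N, (∀ n < N, IsCantorDigit k (digit k n x)) ∧
      gk k x = ∑ n ∈ Finset.range N, gkTerm k n x + 1 / 2 ^ (N + 1) by
    obtain ⟨N, hgood, hgk⟩ := h
    obtain ⟨j, hj, hsum⟩ := exists_sum_gkTerm_eq_nat_div hk x N hgood
    exact ⟨N, j, hj, hsum ▸ hgk⟩
  by_cases hall : ∀ n, IsCantorDigit k (digit k n x)
  · obtain ⟨N, hN, hlast⟩ := exists_last_digit_ne_zero hk hx hxe
    refine ⟨N, fun n _ => hall n, ?_⟩
    have htail : ∀ n ∉ Finset.range (N + 1), gkTerm k n x = 0 := fun n hn =>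
      gkTerm_of_digit_eq_zero (hlast n (by simpa using hn))
    rw [gk_eq_tsum hx.2.ne hall, tsum_eq_sum htail, Finset.sum_range_succ,
      gkTerm_of_digit_eq_pred hk ((hall N).resolve_left hN), one_div_pow]
  · obtain ⟨N, -, hgood, hgk⟩ := exists_gk_eq_sum_add hx.2.ne hall
    exact ⟨N, hgood, hgk⟩

lemma gk_lt_half (hk : 1 < k) {a : ℝ} (ha : 0 ≤ a) (ha' : a < 1 / k) : gk k a < 1 / 2 := by
  have hk' : (1 : ℝ) < k := by exact_mod_cast hk
  have ha1 : a < 1 := ha'.trans ((div_lt_one (by linarith)).mpr hk')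
  have hd₀ : digit k 0 a = 0 := by
    rw [digit_zero_eq_floor (by omega) ⟨ha, ha1⟩, Int.floor_eq_zero_iff]
    exact ⟨by positivity, by rwa [lt_div_iff₀' (by linarith)] at ha'⟩
  have hterm₀ : gkTerm k 0 a = 0 := gkTerm_of_digit_eq_zero hd₀
  by_cases hall : ∀ n, IsCantorDigit k (digit k n a)
  · obtain ⟨n₀, hn₀, hne⟩ := exists_digit_ne_pred hk a 1
    obtain ⟨n, rfl⟩ : ∃ n, n₀ = n + 1 := ⟨n₀ - 1, by omega⟩
    have hlt : gkTerm k (n + 1) a < (1 / 2) ^ (n + 1 + 1) := by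
      rw [gkTerm_of_digit_eq_zero ((hall _).resolve_right hne)]
      positivity
    calc gk k a = ∑' n, gkTerm k (n + 1) a := by
          rw [gk_eq_tsum ha1.ne hall, (summable_gkTerm hk a).tsum_eq_zero_add, hterm₀, zero_add]
      _ < ∑' n : ℕ, (1 / 2) ^ (n + 1 + 1) :=
          Summable.tsum_lt_tsum (fun n => gkTerm_le hk _ a) hlt
            ((summable_nat_add_iff 1).mpr (summable_gkTerm hk a))
            ((summable_nat_add_iff 2).mpr summable_geometric_two)
      _ = 1 / 2 := by
          simp_rw [pow_succ, tsum_mul_right, tsum_geometric_two]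
          norm_num
  · obtain ⟨N, hN, -, hgk⟩ := exists_gk_eq_sum_add ha1.ne hall
    obtain ⟨M, rfl⟩ : ∃ M, N = M + 1 := ⟨N - 1, by
      have : N ≠ 0 := by rintro rfl; exact hN (Or.inl hd₀)
      omega⟩
    have hgeom : ∑ n ∈ Finset.range M, (1 / 2 : ℝ) ^ (n + 1 + 1) = (1 - (1 / 2) ^ M) / 2 := by
      simp_rw [pow_add]
      rw [← Finset.sum_mul, ← Finset.sum_mul, geom_sum_eq (by norm_num)]
      ring
    calc gk k a = ∑ n ∈ Finset.range M, gkTerm k (n + 1) a + (1 / 2) ^ (M + 1 + 1) := by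
          rw [hgk, Finset.sum_range_succ', hterm₀, add_zero, one_div_pow]
      _ ≤ ∑ n ∈ Finset.range M, (1 / 2 : ℝ) ^ (n + 1 + 1) + (1 / 2) ^ (M + 1 + 1) := by
          gcongr with n
          exact gkTerm_le hk _ a
      _ < 1 / 2 := by
          rw [hgeom, pow_succ, pow_succ]
          linarith [pow_pos (by norm_num : (0 : ℝ) < 1 / 2) M]

lemma half_lt_gk (hk : 1 < k) {b : ℝ} (hb' : ((k : ℝ) - 1) / k < b) (hb : b ≤ 1) :
    1 / 2 < gk k b := by
  rcases hb.lt_or_eq with hb1 | rfl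
  swap
  · rw [gk, if_pos rfl]
    norm_num
  have hk' : (1 : ℝ) < k := by exact_mod_cast hk
  have hkb : (k : ℝ) - 1 < k * b := by rwa [div_lt_iff₀' (by linarith)] at hb'
  have hfl : ⌊(k : ℝ) * b⌋ = k - 1 := by
    rw [Int.floor_eq_iff]
    push_cast
    constructor <;> nlinarith
  have hd₀ : digit k 0 b = k - 1 := by
    rw [digit_zero_eq_floor (by omega) ⟨by nlinarith, hb1⟩, hfl]
  have hterm₀ : gkTerm k 0 b = 1 / 2 := by
    rw [gkTerm_of_digit_eq_pred hk hd₀]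
    norm_num
  by_cases hall : ∀ n, IsCantorDigit k (digit k n b)
  · obtain ⟨n, hn, hne⟩ : ∃ n, 1 ≤ n ∧ digit k n b ≠ 0 := by
      by_contra! h
      have hint := pow_mul_eq_floor_of_digit_eq_zero hk h
      rw [pow_one, hfl] at hint
      push_cast at hint
      linarith
    have hpos : 0 < gkTerm k n b := by
      rw [gkTerm_of_digit_eq_pred hk ((hall n).resolve_left hne)]
      positivity
    calc 1 / 2 < ∑ i ∈ {0, n}, gkTerm k i b := by
          rw [Finset.sum_pair (by omega), hterm₀]
          linarith
      _ ≤ gk k b := by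
          rw [gk_eq_tsum hb1.ne hall]
          exact (summable_gkTerm hk b).sum_le_tsum _ fun i _ => gkTerm_nonneg hk i b
  · obtain ⟨N, hN, -, hgk⟩ := exists_gk_eq_sum_add hb1.ne hall
    have hN₀ : N ≠ 0 := by rintro rfl; exact hN (Or.inr hd₀)
    rw [hgk]
    calc 1 / 2 = gkTerm k 0 b := hterm₀.symm
      _ ≤ ∑ n ∈ Finset.range N, gkTerm k n b :=
          Finset.single_le_sum (fun i _ => gkTerm_nonneg hk i b) (by simpa using Nat.pos_of_ne_zero hN₀)
      _ < _ := by
          simp only [lt_add_iff_pos_right]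
          positivity

lemma iterate_tmap_eq_fract (hx : x ∈ Set.Ico 0 1) (n : ℕ) :
    (Tmap k)^[n] x = Int.fract ((k : ℝ) ^ n * x) := by
  induction n with
  | zero => simp [Int.fract_eq_self.mpr hx]
  | succ n ih =>
    have hmul : (k : ℝ) * Int.fract ((k : ℝ) ^ n * x) =
        (k : ℝ) ^ (n + 1) * x - ((k * ⌊(k : ℝ) ^ n * x⌋ : ℤ) : ℝ) := by
      rw [Int.fract]
      push_cast
      ring
    rw [Function.iterate_succ_apply', ih, Tmap, hmul, Int.fract_sub_intCast]

lemma iterate_tmap_two_dyadic {N j : ℕ} (hj : j < 2 ^ N) :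
    (Tmap 2)^[N] ((j : ℝ) / 2 ^ N + 1 / 2 ^ (N + 1)) = 1 / 2 := by
  have hj' : (j : ℝ) + 1 ≤ 2 ^ N := by exact_mod_cast hj
  have hmul : (2 : ℝ) ^ N * (j / 2 ^ N + 1 / 2 ^ (N + 1)) = (j : ℤ) + 1 / 2 := by
    rw [pow_succ]
    push_cast
    field_simp
  have hIco : (j : ℝ) / 2 ^ N + 1 / 2 ^ (N + 1) ∈ Set.Ico 0 1 := by
    have hsum : (j : ℝ) / 2 ^ N + 1 / 2 ^ (N + 1) = (j + 1 / 2) / 2 ^ N := by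
      rw [pow_succ]
      field_simp
    refine ⟨by positivity, ?_⟩
    rw [hsum, div_lt_one (by positivity)]
    linarith
  rw [iterate_tmap_eq_fract hIco, Nat.cast_ofNat, hmul, Int.fract_intCast_add,
    Int.fract_eq_self.mpr ⟨by norm_num, by norm_num⟩]

end CantorFunction

/-- for `x = ℓ/k^m ∈ (0,1)`, the point `g_k(x)` is not in the
survivor set `W_2(g_k(a), g_k(b))`. -/
theorem stmt15 (k : ℕ) (hk : 3 ≤ k) (a b : ℝ) (ha : 0 ≤ a) (ha' : a < 1 / (k : ℝ))
    (hb' : ((k : ℝ) - 1) / k < b) (hb : b ≤ 1)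
    (x : ℝ) (hx : x ∈ Set.Ioo (0 : ℝ) 1) (l m : ℕ) (hxe : x = (l : ℝ) / (k : ℝ) ^ m) :
    gk k x ∉ W 2 (gk k a) (gk k b) ∧
      ∃ n : ℕ, (Tmap 2)^[n] (gk k x) ∈ Set.Ioo (gk k a) (gk k b) := by
  have hk1 : 1 < k := by omega
  obtain ⟨N, j, hj, hgk⟩ := gk_eq_dyadic hk1 hx hxe
  have hmem : (Tmap 2)^[N] (gk k x) ∈ Set.Ioo (gk k a) (gk k b) := by
    rw [hgk, iterate_tmap_two_dyadic hj]
    exact ⟨gk_lt_half hk1 ha ha', half_lt_gk hk1 hb' hb⟩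
  exact ⟨fun hW => hW.2 N hmem, N, hmem⟩
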